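/- arXiv:2505.03224 — 6 statements merged into one kernel-verified Lean document; each statement's English description precedes it below -/
import Mathlib

section
/- Let L be a normed field whose norm is nonarchimedean (the distance is ultrametric), let θ ∈ L and n a natural number. For a polynomial f ∈ L[t] with natDegree f ≤ n set ‖f‖_θ := max_{0≤i≤n} ‖(hasseDeriv i f).eval θ‖ and ‖f‖ := max_{0≤i≤n} ‖f.coeff i‖ (the Gauss norm). If (f_k) is a sequence of polynomials in L[t] with natDegree f_k ≤ n for all k and ‖f_k‖_θ → 0 as k → ∞, then ‖f_k‖ → 0 as k → ∞. -/
/-!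
Taylor expansion at `θ` writes `f = ∑ⱼ (hasseDeriv j f)(θ) (t - θ)ʲ`, so every coefficient of `f`
is a sum of the values `(hasseDeriv j f)(θ)` times coefficients of `(t - θ)ʲ` with `j ≤ n`.
By the ultrametric inequality its norm is at most `C · ‖f‖_θ`, where `C` bounds the finitely many
coefficients of `(t - θ)ʲ`, `j ≤ n`; hence `‖fₖ‖ ≤ C · ‖fₖ‖_θ → 0`.
-/

open Finset

namespace Polynomial

theorem coeff_eq_sum_taylor_coeff_mul_coeff {R : Type*} [CommRing R] {f : R[X]} {n : ℕ}
    (hf : f.natDegree ≤ n) (r : R) (i : ℕ) :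
    f.coeff i = ∑ j ∈ range (n + 1), (taylor r f).coeff j * ((X - C r) ^ j).coeff i := by
  have hsum : f = ∑ j ∈ range (n + 1), C ((taylor r f).coeff j) * (X - C r) ^ j := by
    conv_lhs => rw [← sum_taylor_eq f r]
    exact sum_over_range' _ (by simp) (n + 1) (by rw [natDegree_taylor]; omega)
  conv_lhs => rw [hsum]
  simp only [finsetSum_coeff, coeff_C_mul]

theorem exists_sup_nnnorm_coeff_le_mul_sup_nnnorm_hasseDeriv_eval {R : Type*} [NormedCommRing R]
    [IsUltrametricDist R] (r : R) (n : ℕ) :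
    ∃ c : NNReal, ∀ f : R[X], f.natDegree ≤ n →
      (range (n + 1)).sup (fun i => ‖f.coeff i‖₊) ≤
        c * (range (n + 1)).sup (fun j => ‖(hasseDeriv j f).eval r‖₊) := by
  refine ⟨(range (n + 1) ×ˢ range (n + 1)).sup fun p => ‖((X - C r) ^ p.2).coeff p.1‖₊,
    fun f hf => Finset.sup_le fun i hi => ?_⟩
  rw [coeff_eq_sum_taylor_coeff_mul_coeff hf r i]
  refine IsUltrametricDist.nnnorm_sum_le_of_forall_le fun j hj => ?_
  have htaylor : ‖(taylor r f).coeff j‖₊ ≤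
      (range (n + 1)).sup (fun j => ‖(hasseDeriv j f).eval r‖₊) := by
    rw [taylor_coeff]
    exact Finset.le_sup (f := fun j => ‖(hasseDeriv j f).eval r‖₊) hj
  have hpow : ‖((X - C r) ^ j).coeff i‖₊ ≤
      (range (n + 1) ×ˢ range (n + 1)).sup fun p => ‖((X - C r) ^ p.2).coeff p.1‖₊ :=
    Finset.le_sup (f := fun p : ℕ × ℕ => ‖((X - C r) ^ p.2).coeff p.1‖₊) (mk_mem_product hi hj)
  calc ‖(taylor r f).coeff j * ((X - C r) ^ j).coeff i‖₊
      ≤ ‖(taylor r f).coeff j‖₊ * ‖((X - C r) ^ j).coeff i‖₊ := nnnorm_mul_le _ _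
    _ ≤ _ := by rw [mul_comm]; exact mul_le_mul' hpow htaylor

end Polynomial

/-- Over a nonarchimedean normed field, if a sequence of polynomials of
degree at most `n` tends to zero in the norm `‖·‖_θ` given by the maximum of the norms of
the Hasse-derivative values at `θ`, then it tends to zero in the Gauss norm, i.e. the
maximum of the norms of the coefficients. -/
theorem gauss_norm_tendsto_zero_of_theta_norm_tendsto_zero
    (L : Type*) [NormedField L] [IsUltrametricDist L] (θ : L) (n : ℕ)
    (f : ℕ → Polynomial L) (hdeg : ∀ k, (f k).natDegree ≤ n)
    (h : Filter.Tendsto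
      (fun k => (Finset.range (n + 1)).sup
        fun i => ‖(Polynomial.hasseDeriv i (f k)).eval θ‖₊)
      Filter.atTop (nhds 0)) :
    Filter.Tendsto
      (fun k => (Finset.range (n + 1)).sup fun i => ‖(f k).coeff i‖₊)
      Filter.atTop (nhds 0) := by
  obtain ⟨c, hc⟩ := Polynomial.exists_sup_nnnorm_coeff_le_mul_sup_nnnorm_hasseDeriv_eval θ n
  have hbound : Filter.Tendsto (fun k => c * (Finset.range (n + 1)).sup
      fun i => ‖(Polynomial.hasseDeriv i (f k)).eval θ‖₊) Filter.atTop (nhds 0) := by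
    simpa using h.const_mul c
  exact tendsto_of_tendsto_of_tendsto_of_le_of_le tendsto_const_nhds hbound
    (fun _ => zero_le) (fun k => hc (f k) (hdeg k))
end

section
/- Let n be a natural number and u ∈ K_∞ with |u|_∞ < q^n. Then the family indexed by i ∈ ℕ with term u^{q^{i+1}} / (θ^{q^{i+1}} − θ)^n (i.e. the terms of the series ∑_{i≥1} u^{q^i}/(θ^{q^i} − θ)^n defining the n-th Kochubei polylogarithm at u) is summable in K_∞. -/
/-!
Since `|θ|_∞ > 1`, the ultrametric inequality gives `|θ^m - θ|_∞ = |θ|_∞^m`, so the `i`-th term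
has absolute value `|u / θ^n|_∞ ^ q^(i+1)` with `|u / θ^n|_∞ < 1`. The terms therefore tend to
zero, and in the complete nonarchimedean field `K_∞` this is equivalent to summability.
-/

open FunctionField
open scoped Multiplicative

/-- The canonical ring homomorphism from `K = 𝔽_q(θ)` into its completion
`K_∞ = 𝔽_q((1/θ))` at the infinite place. -/
noncomputable def ratFuncToFqtInfty (Fq : Type*) [Field Fq] [DecidableEq (RatFunc Fq)] :
    RatFunc Fq →+* RatFunc.CompletionAtInfty Fq :=
  letI := RatFunc.inftyValued Fq
  UniformSpace.Completion.coeRingHom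

open Filter Topology WithZero

namespace Valued

variable {R Γ₀ : Type*} [Ring R] [LinearOrderedCommGroupWithZero Γ₀] [Valued R Γ₀]

instance nonarchimedeanRing : NonarchimedeanRing R :=
  (toUniformSpace_eq R Γ₀).symm ▸ v.subgroups_basis.nonarchimedean

theorem tendsto_zero_of_eventually_v_le {α : Type*} {l : Filter α} {f g : α → R}
    (hg : Tendsto g l (𝓝 0)) (hfg : ∀ᶠ i in l, v (f i) ≤ v (g i)) : Tendsto f l (𝓝 0) := by
  rw [(hasBasis_nhds_zero R Γ₀).tendsto_right_iff] at hg ⊢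
  intro γ _
  filter_upwards [hg γ trivial, hfg] with i hgi hfgi
  simp only [Valuation.restrict_lt_iff_lt_embedding] at hgi ⊢
  exact hfgi.trans_lt hgi

end Valued

theorem Valuation.map_pow_sub_self {R Γ₀ : Type*} [Ring R] [LinearOrderedCommGroupWithZero Γ₀]
    (v : Valuation R Γ₀) {x : R} (hx : 1 < v x) {m : ℕ} (hm : 1 < m) :
    v (x ^ m - x) = v (x ^ m) :=
  v.map_sub_eq_of_lt_left (by rw [map_pow]; exact lt_self_pow₀ hx hm)

theorem Valued.tendsto_pow_div_pow_sub_self_pow {K Γ₀ : Type*} [Field K]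
    [LinearOrderedCommGroupWithZero Γ₀] [MulArchimedean Γ₀] [Valued K Γ₀]
    {α : Type*} {l : Filter α} {x u : K} {n : ℕ} (hx : 1 < v x) (hu : v u < v x ^ n)
    {m : α → ℕ} (hm : Tendsto m l atTop) (hm_one : ∀ i, 1 < m i) :
    Tendsto (fun i => u ^ m i / (x ^ m i - x) ^ n) l (𝓝 0) := by
  have hy : v (u / x ^ n) < 1 := by
    have : v x ^ n ≠ 0 := pow_ne_zero _ (zero_lt_one.trans hx).ne'
    rwa [map_div₀, map_pow, div_lt_one₀ (zero_lt_iff.mpr this)]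
  refine tendsto_zero_of_eventually_v_le ((tendsto_zero_pow_of_v_lt_one hy).comp hm)
    (Eventually.of_forall fun i => le_of_eq ?_)
  simp only [Function.comp_apply, map_div₀, map_pow, v.map_pow_sub_self hx (hm_one i)]
  rw [div_pow, ← pow_mul, ← pow_mul, mul_comm]

section CompletionAtInfty

variable (F : Type*) [Field F] [DecidableEq (RatFunc F)]

instance RatFunc.CompletionAtInfty.completeSpace : CompleteSpace (RatFunc.CompletionAtInfty F) :=
  @UniformSpace.Completion.completeSpace _ (RatFunc.inftyValued F).toUniformSpace

theorem valuation_ratFuncToFqtInfty (r : RatFunc F) :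
    Valued.v (ratFuncToFqtInfty F r) = RatFunc.inftyValuation F r :=
  @Valued.valuedCompletion_apply _ _ _ _ (RatFunc.inftyValued F) r

theorem valuation_ratFuncToFqtInfty_X : Valued.v (ratFuncToFqtInfty F RatFunc.X) = exp 1 := by
  rw [valuation_ratFuncToFqtInfty, RatFunc.inftyValuation.X]

end CompletionAtInfty

/-- For `u ∈ K_∞` with `|u|_∞ < q^n`, the family of terms
`u^{q^{i+1}} / (θ^{q^{i+1}} - θ)^n` (the terms of the series `∑_{i ≥ 1} u^{q^i}/(θ^{q^i}-θ)^n`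
defining the `n`-th Kochubei polylogarithm at `u`) is summable in `K_∞`. -/
theorem kochubeiLi_summable (Fq : Type*) [Field Fq] [Fintype Fq] [DecidableEq (RatFunc Fq)]
    (q : ℕ) (hq : Fintype.card Fq = q) (n : ℕ) (u : RatFunc.CompletionAtInfty Fq)
    (hu : Valued.v u < (↑(Multiplicative.ofAdd (n : ℤ)) : WithZero (Multiplicative ℤ))) :
    Summable (fun i : ℕ =>
      u ^ q ^ (i + 1) /
        (ratFuncToFqtInfty Fq RatFunc.X ^ q ^ (i + 1) - ratFuncToFqtInfty Fq RatFunc.X) ^ n) := by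
  have hq_one : 1 < q := hq ▸ Fintype.one_lt_card
  have hθ := valuation_ratFuncToFqtInfty_X Fq
  refine NonarchimedeanAddGroup.summable_of_tendsto_cofinite_zero ?_
  rw [Nat.cofinite_eq_atTop]
  refine Valued.tendsto_pow_div_pow_sub_self_pow (by rw [hθ, ← exp_zero, exp_lt_exp]; exact one_pos)
    ?_ ((tendsto_pow_atTop_atTop_of_one_lt hq_one).comp (tendsto_add_atTop_nat 1))
    fun i => Nat.one_lt_pow i.succ_ne_zero hq_one
  rwa [hθ, ← exp_nsmul, nsmul_one]
end

section
/- Let n ≥ 1 and u ∈ K_∞ with |u|_∞ < q^{n−1}. Then Li_{𝒦,n}(θ·u) − θ·Li_{𝒦,n}(u) = Li_{𝒦,n−1}(u), where Li_{𝒦,m}(w) := ∑'_{i≥1} w^{q^i}/(θ^{q^i} − θ)^m (a tsum in K_∞; under the hypothesis all three series occurring are summable, since |θu|_∞ < q^n, |u|_∞ < q^n and |u|_∞ < q^{n−1}). -/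
/-
With `D = θ^e - θ`, the field identity `(θw)^e / D^(k+1) - θ · w^e / D^(k+1) = w^e / D^k` holds
termwise, so the difference equation comes from subtracting the series once they converge.
Since `|θ^e - θ| = q^e` for `e ≥ 2`, the `i`-th term of `Li_m(w)` has absolute value
`|w / θ^m|^{q^i}`, which tends to `0` when `|w| < q^m`; in the complete nonarchimedean field
`K_∞` this suffices for summability.
-/

open FunctionField
open scoped Multiplicative

/-- The value of the `m`-th Kochubei polylogarithm at `w ∈ K_∞`, as the sum
`∑'_{i ≥ 1} w^{q^i} / (θ^{q^i} - θ)^m` in `K_∞`. -/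
noncomputable def kochubeiLiVal (Fq : Type*) [Field Fq] [DecidableEq (RatFunc Fq)]
    (q m : ℕ) (w : RatFunc.CompletionAtInfty Fq) : RatFunc.CompletionAtInfty Fq :=
  ∑' i : ℕ,
    w ^ q ^ (i + 1) /
      (ratFuncToFqtInfty Fq RatFunc.X ^ q ^ (i + 1) - ratFuncToFqtInfty Fq RatFunc.X) ^ m

namespace Valued

open Filter Topology

variable {R Γ₀ : Type*} [Ring R] [LinearOrderedCommGroupWithZero Γ₀] [Valued R Γ₀]

instance (priority := 100) toNonarchimedeanRing : NonarchimedeanRing R :=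
  (toUniformSpace_eq R Γ₀).symm ▸ v.subgroups_basis.nonarchimedean

theorem tendsto_zero_of_v_le {ι : Type*} {l : Filter ι} {f g : ι → R}
    (hg : Tendsto g l (𝓝 0)) (hfg : ∀ i, v (f i) ≤ v (g i)) : Tendsto f l (𝓝 0) := by
  rw [(hasBasis_nhds_zero R Γ₀).tendsto_right_iff] at hg ⊢
  intro γ _
  filter_upwards [hg γ trivial] with i hi
  exact lt_of_le_of_lt (v.restrict_le_iff.mpr (hfg i)) hi

theorem summable_of_v_le [CompleteSpace R] {ι : Type*} {f g : ι → R}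
    (hg : Tendsto g cofinite (𝓝 0)) (hfg : ∀ i, v (f i) ≤ v (g i)) : Summable f :=
  NonarchimedeanAddGroup.summable_of_tendsto_cofinite_zero (tendsto_zero_of_v_le hg hfg)

end Valued

theorem mul_pow_div_sub_mul_div_pow_succ {F : Type*} [Field F] {a w : F} {e k : ℕ}
    (h : a ^ e - a ≠ 0) :
    (a * w) ^ e / (a ^ e - a) ^ (k + 1) - a * (w ^ e / (a ^ e - a) ^ (k + 1))
      = w ^ e / (a ^ e - a) ^ k := by
  field_simp
  ring

namespace RatFunc.CompletionAtInfty

open Filter WithZero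

variable (Fq : Type*) [Field Fq] [DecidableEq (RatFunc Fq)]

instance : CompleteSpace (CompletionAtInfty Fq) :=
  @UniformSpace.Completion.completeSpace (RatFunc Fq) (inftyValued Fq).toUniformSpace

local notation "θ" => ratFuncToFqtInfty Fq RatFunc.X

theorem v_theta : Valued.v θ = exp 1 := by
  let := inftyValued Fq
  rw [show Valued.v θ = Valued.v (RatFunc.X : RatFunc Fq) from Valued.valuedCompletion_apply _,
    inftyValued.def, ← inftyValuation_apply, inftyValuation.X]

theorem v_theta_pow_sub_theta {e : ℕ} (he : 2 ≤ e) : Valued.v (θ ^ e - θ) = exp (e : ℤ) := by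
  have hpow : Valued.v (θ ^ e) = exp (e : ℤ) := by
    rw [map_pow, v_theta, ← exp_nsmul, nsmul_one]
  rw [Valuation.map_sub_eq_of_lt_left _ (by rw [hpow, v_theta, exp_lt_exp]; omega), hpow]

theorem theta_pow_sub_theta_ne_zero {e : ℕ} (he : 2 ≤ e) : θ ^ e - θ ≠ 0 := by
  rw [← (Valued.v).ne_zero_iff, v_theta_pow_sub_theta Fq he]
  exact exp_ne_zero

theorem v_pow_div_theta_pow_sub_theta_pow {e : ℕ} (he : 2 ≤ e) (m : ℕ)
    (w : CompletionAtInfty Fq) :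
    Valued.v (w ^ e / (θ ^ e - θ) ^ m) = Valued.v ((w / θ ^ m) ^ e) := by
  simp only [map_div₀, map_pow, v_theta_pow_sub_theta Fq he, v_theta, div_pow, ← pow_mul,
    ← exp_nsmul, nsmul_eq_mul, Nat.cast_mul, mul_one, mul_comm]

theorem summable_pow_div_theta_pow_sub_theta_pow {q m : ℕ} (hq : 2 ≤ q) {w : CompletionAtInfty Fq}
    (hw : Valued.v w < exp (m : ℤ)) :
    Summable fun i : ℕ ↦ w ^ q ^ (i + 1) / (θ ^ q ^ (i + 1) - θ) ^ m := by
  have hx : Valued.v (w / θ ^ m) < 1 := by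
    rwa [map_div₀, map_pow, v_theta, ← exp_nsmul, nsmul_one, div_lt_one₀ (by simp)]
  have hexp : Tendsto (fun i : ℕ ↦ q ^ (i + 1)) atTop atTop :=
    (tendsto_pow_atTop_atTop_of_one_lt hq).comp (tendsto_add_atTop_nat 1)
  refine Valued.summable_of_v_le ?_ fun i ↦
    (v_pow_div_theta_pow_sub_theta_pow Fq ?_ m w).le
  · rw [Nat.cofinite_eq_atTop]
    exact (Valued.tendsto_zero_pow_of_v_lt_one hx).comp hexp
  · exact hq.trans (Nat.le_self_pow (by omega) q)

end RatFunc.CompletionAtInfty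

/-- For `n ≥ 1` and `u ∈ K_∞` with `|u|_∞ < q^{n-1}`, the Kochubei
polylogarithm values satisfy the Carlitz difference equation
`Li_{𝒦,n}(θ·u) - θ·Li_{𝒦,n}(u) = Li_{𝒦,n-1}(u)`. -/
theorem kochubeiLiVal_difference_equation (Fq : Type*) [Field Fq] [Fintype Fq]
    [DecidableEq (RatFunc Fq)] (q : ℕ) (hq : Fintype.card Fq = q) (n : ℕ) (hn : 1 ≤ n)
    (u : RatFunc.CompletionAtInfty Fq)
    (hu : Valued.v u < (↑(Multiplicative.ofAdd ((n - 1 : ℕ) : ℤ)) : WithZero (Multiplicative ℤ))) :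
    kochubeiLiVal Fq q n (ratFuncToFqtInfty Fq RatFunc.X * u)
        - ratFuncToFqtInfty Fq RatFunc.X * kochubeiLiVal Fq q n u
      = kochubeiLiVal Fq q (n - 1) u := by
  open RatFunc.CompletionAtInfty WithZero in
  set θ := ratFuncToFqtInfty Fq RatFunc.X
  have hq2 : 2 ≤ q := hq ▸ Fintype.one_lt_card
  obtain ⟨k, rfl⟩ : ∃ k, n = k + 1 := ⟨n - 1, by omega⟩
  rw [Nat.add_sub_cancel, ← exp_eq_coe_ofAdd] at hu
  rw [Nat.add_sub_cancel]
  have hθu : Valued.v (θ * u) < exp ((k + 1 : ℕ) : ℤ) :=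
    calc Valued.v (θ * u) = exp 1 * Valued.v u := by
          rw [map_mul, v_theta]
      _ < exp 1 * exp (k : ℤ) := by gcongr; exact zero_lt_iff.mpr exp_ne_zero
      _ = exp ((k + 1 : ℕ) : ℤ) := by rw [← exp_add]; push_cast; ring_nf
  have hu' : Valued.v u < exp ((k + 1 : ℕ) : ℤ) := hu.trans (exp_lt_exp.mpr (by omega))
  rw [kochubeiLiVal, kochubeiLiVal, kochubeiLiVal, ← tsum_mul_left,
    ← (summable_pow_div_theta_pow_sub_theta_pow Fq hq2 hθu).tsum_sub
      ((summable_pow_div_theta_pow_sub_theta_pow Fq hq2 hu').mul_left _)]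
  exact tsum_congr fun i ↦ mul_pow_div_sub_mul_div_pow_succ
    (theta_pow_sub_theta_ne_zero Fq (hq2.trans (Nat.le_self_pow (by omega) q)))
end

section
/- Let r ≥ 1, s = (s_1,…,s_r) a tuple of natural numbers, and u = (u_1,…,u_r) ∈ K_∞^r with |u_j|_∞ < q^{s_j} for every j. Then the family indexed by the set of strictly decreasing tuples of positive integers i_1 > i_2 > ⋯ > i_r > 0, with term ∏_{j=1}^r u_j^{q^{i_j}} / (θ^{q^{i_j}} − θ)^{s_j}, is summable in K_∞. (That is, the s-th Kochubei multiple polylogarithm converges on the open polydisc 𝔻'_s.) -/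
/-!
Write `T` for the image of `θ` in `K_∞`. For `m ≥ 2` the polynomial `θ^m - θ` has degree `m`,
so `|T^m - T|_∞ = q^m`, while `|u_j|_∞ < q^{s_j}` means `|u_j|_∞ ≤ q^{s_j - 1}` because the value
group is `ℤ`. Hence the `j`-th factor has absolute value at most `q^{-q^{i_j}} ≤ q^{-i_j}`, and the
whole term at most `q^{-(i_1 + ⋯ + i_r)}`, which tends to `0` along the cofinite filter. In the
complete nonarchimedean field `K_∞` this already forces summability.
-/

open FunctionField
open scoped Multiplicative

open Filter Topology WithZero

namespace Valued

instance nonarchimedeanAddGroup {R Γ₀ : Type*} [Ring R] [LinearOrderedCommGroupWithZero Γ₀]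
    [Valued R Γ₀] : NonarchimedeanAddGroup R where
  is_nonarchimedean U hU := by
    obtain ⟨γ, hγ⟩ := mem_nhds_zero.mp hU
    refine ⟨⟨v.restrict.ltAddSubgroup γ, isOpen_iff_mem_nhds.2 fun x hx => mem_nhds.2 ⟨γ, ?_⟩⟩, hγ⟩
    intro y hy
    calc v.restrict y = v.restrict (y - x + x) := by rw [sub_add_cancel]
      _ ≤ max (v.restrict (y - x)) (v.restrict x) := v.restrict.map_add _ _
      _ < γ := max_lt hy hx

variable {R ι : Type*} [Ring R] [Valued R ℤᵐ⁰]

theorem tendsto_zero_of_le_exp_neg {l : Filter ι} {f : ι → R} {n : ι → ℕ}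
    (hn : Tendsto n l atTop) (hf : ∀ i, v (f i) ≤ exp (-(n i : ℤ))) : Tendsto f l (𝓝 0) := by
  simp only [(hasBasis_nhds_zero R ℤᵐ⁰).tendsto_right_iff, forall_const,
    Valuation.restrict_lt_iff_lt_embedding]
  intro γ
  obtain ⟨k, hk⟩ := exists_exp_neg_natCast_lt (x := MonoidWithZeroHom.ValueGroup₀.embedding γ.1)
    (by simp)
  filter_upwards [hn.eventually_gt_atTop k] with i hi
  exact (hf i).trans_lt ((exp_lt_exp.2 (by omega)).trans hk)

theorem summable_of_le_exp_neg [CompleteSpace R] {f : ι → R} {n : ι → ℕ}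
    (hn : Tendsto n cofinite atTop) (hf : ∀ i, v (f i) ≤ exp (-(n i : ℤ))) : Summable f :=
  NonarchimedeanAddGroup.summable_of_tendsto_cofinite_zero (tendsto_zero_of_le_exp_neg hn hf)

end Valued

theorem WithZero.exp_sum {ι M : Type*} [AddCommMonoid M] (s : Finset ι) (f : ι → M) :
    exp (∑ i ∈ s, f i) = ∏ i ∈ s, exp (f i) := by
  induction s using Finset.cons_induction <;> simp_all [exp_add]

theorem tendsto_sum_cofinite_atTop (ι : Type*) [Fintype ι] :
    Tendsto (fun i : ι → ℕ => ∑ j, i j) cofinite atTop := by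
  refine tendsto_atTop.2 fun N => eventually_cofinite.2 ?_
  refine (Set.Finite.pi fun _ => Set.finite_Iic N).subset fun i hi j _ => ?_
  have hsum : ∑ j, i j < N := not_le.1 hi
  exact (Finset.single_le_sum (fun k _ => Nat.zero_le (i k)) (Finset.mem_univ j)).trans hsum.le

namespace RatFunc.CompletionAtInfty

variable (Fq : Type*) [Field Fq] [DecidableEq (RatFunc Fq)]

instance : CompleteSpace (RatFunc.CompletionAtInfty Fq) :=
  letI := RatFunc.inftyValued Fq
  UniformSpace.Completion.completeSpace (RatFunc Fq)

variable {Fq}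

theorem v_ratFuncToFqtInfty (x : RatFunc Fq) :
    Valued.v (ratFuncToFqtInfty Fq x) = RatFunc.inftyValuation Fq x := by
  let := RatFunc.inftyValued Fq
  exact Valued.valuedCompletion_apply x

theorem v_ratFuncToFqtInfty_polynomial {p : Polynomial Fq} (hp : p ≠ 0) :
    Valued.v (ratFuncToFqtInfty Fq (algebraMap _ _ p)) = exp (p.natDegree : ℤ) := by
  rw [v_ratFuncToFqtInfty, RatFunc.inftyValuation_apply, RatFunc.inftyValuation.polynomial Fq hp]

theorem v_X_pow_sub_X {n : ℕ} (hn : 2 ≤ n) :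
    Valued.v (ratFuncToFqtInfty Fq RatFunc.X ^ n - ratFuncToFqtInfty Fq RatFunc.X) =
      exp (n : ℤ) := by
  have hdeg : (Polynomial.X ^ n - Polynomial.X : Polynomial Fq).natDegree = n := by
    rw [Polynomial.natDegree_sub_eq_left_of_natDegree_lt] <;> simp; omega
  have hne : (Polynomial.X ^ n - Polynomial.X : Polynomial Fq) ≠ 0 := by
    rintro h; rw [h, Polynomial.natDegree_zero] at hdeg; omega
  have hmap : ratFuncToFqtInfty Fq RatFunc.X ^ n - ratFuncToFqtInfty Fq RatFunc.X =
      ratFuncToFqtInfty Fq (algebraMap _ _ (Polynomial.X ^ n - Polynomial.X : Polynomial Fq)) := by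
    simp [RatFunc.algebraMap_X]
  rw [hmap, v_ratFuncToFqtInfty_polynomial hne, hdeg]

theorem v_pow_div_X_pow_sub_X_pow_le {x : RatFunc.CompletionAtInfty Fq} {s m : ℕ}
    (hx : Valued.v x < exp (s : ℤ)) (hm : 2 ≤ m) :
    Valued.v (x ^ m / (ratFuncToFqtInfty Fq RatFunc.X ^ m - ratFuncToFqtInfty Fq RatFunc.X) ^ s)
      ≤ exp (-(m : ℤ)) := by
  have hx' : Valued.v x ≤ exp ((s : ℤ) - 1) := by
    rwa [← lt_mul_exp_iff_le exp_ne_zero, ← exp_add, sub_add_cancel]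
  rw [map_div₀, map_pow, map_pow, v_X_pow_sub_X hm]
  calc Valued.v x ^ m / exp (m : ℤ) ^ s
      ≤ exp ((s : ℤ) - 1) ^ m / exp (m : ℤ) ^ s := by gcongr; exact zero_le
    _ = exp (-(m : ℤ)) := by
      rw [← exp_nsmul, ← exp_nsmul, ← exp_sub]
      congr 1
      simp only [nsmul_eq_mul]
      ring

theorem v_prod_pow_div_X_pow_sub_X_pow_le {ι : Type*} [Fintype ι] {q : ℕ} (hq : 2 ≤ q)
    {s : ι → ℕ} {u : ι → RatFunc.CompletionAtInfty Fq}
    (hu : ∀ j, Valued.v (u j) < exp (s j : ℤ))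
    {i : ι → ℕ} (hi : ∀ j, 0 < i j) :
    Valued.v (∏ j, u j ^ q ^ i j /
        (ratFuncToFqtInfty Fq RatFunc.X ^ q ^ i j - ratFuncToFqtInfty Fq RatFunc.X) ^ s j)
      ≤ exp (-((∑ j, i j : ℕ) : ℤ)) := by
  rw [map_prod, Nat.cast_sum, ← Finset.sum_neg_distrib, exp_sum]
  refine Finset.prod_le_prod' fun j _ => ?_
  have hlt : i j < q ^ i j := Nat.lt_pow_self hq
  have h2 : 2 ≤ q ^ i j := hq.trans (Nat.le_self_pow (hi j).ne' q)
  exact (v_pow_div_X_pow_sub_X_pow_le (hu j) h2).trans (exp_le_exp.2 (by omega))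

end RatFunc.CompletionAtInfty

theorem kmpl_summable_general (Fq : Type*) [Field Fq] [Fintype Fq] [DecidableEq (RatFunc Fq)]
    (q : ℕ) (hq : Fintype.card Fq = q) (r : ℕ) (s : Fin r → ℕ)
    (u : Fin r → RatFunc.CompletionAtInfty Fq)
    (hu : ∀ j, Valued.v (u j) < (↑(Multiplicative.ofAdd ((s j : ℕ) : ℤ)) : WithZero (Multiplicative ℤ))) :
    Summable (fun i : {i : Fin r → ℕ // StrictAnti i ∧ ∀ j, 0 < i j} =>
      ∏ j, u j ^ q ^ (i.1 j) /
        (ratFuncToFqtInfty Fq RatFunc.X ^ q ^ (i.1 j) - ratFuncToFqtInfty Fq RatFunc.X)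
          ^ s j) := by
  have hq2 : 2 ≤ q := hq ▸ Fintype.one_lt_card
  exact Valued.summable_of_le_exp_neg
    ((tendsto_sum_cofinite_atTop (Fin r)).comp Subtype.val_injective.tendsto_cofinite)
    fun i => RatFunc.CompletionAtInfty.v_prod_pow_div_X_pow_sub_X_pow_le hq2 hu i.2.2

/-- For `s = (s_1, …, s_r)` and `u = (u_1, …, u_r) ∈ K_∞^r` with
`|u_j|_∞ < q^{s_j}` for all `j`, the family of terms
`∏_j u_j^{q^{i_j}} / (θ^{q^{i_j}} - θ)^{s_j}` indexed by the strictly decreasing tuples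
`i_1 > i_2 > ⋯ > i_r > 0` is summable in `K_∞`; i.e. the `s`-th Kochubei multiple
polylogarithm converges on the open polydisc `𝔻'_s`. -/
theorem kmpl_summable (Fq : Type*) [Field Fq] [Fintype Fq] [DecidableEq (RatFunc Fq)]
    (q : ℕ) (hq : Fintype.card Fq = q) (r : ℕ) (hr : 1 ≤ r) (s : Fin r → ℕ)
    (u : Fin r → RatFunc.CompletionAtInfty Fq)
    (hu : ∀ j, Valued.v (u j) < (↑(Multiplicative.ofAdd ((s j : ℕ) : ℤ)) : WithZero (Multiplicative ℤ))) :
    Summable (fun i : {i : Fin r → ℕ // StrictAnti i ∧ ∀ j, 0 < i j} =>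
      ∏ j, u j ^ q ^ (i.1 j) /
        (ratFuncToFqtInfty Fq RatFunc.X ^ q ^ (i.1 j) - ratFuncToFqtInfty Fq RatFunc.X)
          ^ s j) :=
  kmpl_summable_general Fq q hq r s u hu
end

section
/- Let F be an algebraically closed field of characteristic p > 0, q = p^ℓ with ℓ ≥ 1, θ ∈ F, and n ≥ 1. Then for every polynomial f ∈ F[t] there exists a unique polynomial R ∈ F[t] with degree R < n such that f − R = (φ(B) − B)·(t − θ)^n for some B ∈ F[t]. (This is the content of the identifications Ext¹_ℱ(M_{C^{⊗n}}, M_{C^{⊗n}}) ≅ F[t]/{B^{(−1)}(t−θ)^n − (t−θ)^n B : B ∈ F[t]} ≅ F^n: every class modulo the subgroup {(φ(B)−B)(t−θ)^n} contains exactly one polynomial of degree < n.) -/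
/-!
Write `σ` for the inverse of the `q`-power Frobenius and `g = (t - θ)^n`. Over an
algebraically closed field the Artin–Schreier map `x ↦ σ x - x` is surjective (with `x = y^q`
it becomes `y ↦ y - y^q`, and `y^q - y = c` has a root), hence so is `B ↦ φ(B) - B` on `F[t]`,
coefficient by coefficient. The subgroup `{(φ(B) - B) g}` is therefore the ideal `(g)`, and
since `g` is monic every class modulo `(g)` has exactly one representative of degree `< n`,
namely `f %ₘ g`.
-/

open Polynomial

theorem IsAlgClosed.exists_pow_sub_self_eq {K : Type*} [Field K] [IsAlgClosed K] {m : ℕ}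
    (hm : 2 ≤ m) (c : K) : ∃ y : K, y ^ m - y = c := by
  have hdeg : (X ^ m - X : K[X]).natDegree ≠ 0 := by
    rw [natDegree_sub_eq_left_of_natDegree_lt] <;>
      simp only [natDegree_pow, natDegree_X, mul_one, ne_eq] <;> omega
  obtain ⟨y, hy⟩ := IsAlgClosed.eval_surjective hdeg c
  exact ⟨y, by simpa using hy⟩

theorem surjective_iterateFrobeniusEquiv_symm_sub_self (K : Type*) [Field K] [IsAlgClosed K]
    (p : ℕ) [Fact p.Prime] [CharP K p] {ℓ : ℕ} (hℓ : 1 ≤ ℓ) :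
    Function.Surjective fun x : K ↦ (iterateFrobeniusEquiv K p ℓ).symm x - x := by
  intro c
  have hq : 2 ≤ p ^ ℓ := (Fact.out : p.Prime).two_le.trans (Nat.le_self_pow (by omega) p)
  obtain ⟨y, hy⟩ := IsAlgClosed.exists_pow_sub_self_eq hq (-c)
  refine ⟨iterateFrobeniusEquiv K p ℓ y, ?_⟩
  change (iterateFrobeniusEquiv K p ℓ).symm (iterateFrobeniusEquiv K p ℓ y) - y ^ p ^ ℓ = c
  rw [RingEquiv.symm_apply_apply]
  linear_combination -hy

theorem Polynomial.surjective_map_sub_self {R : Type*} [Ring R] {σ : R →+* R}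
    (hσ : Function.Surjective fun x ↦ σ x - x) :
    Function.Surjective fun B : R[X] ↦ B.map σ - B := by
  intro h
  induction h using Polynomial.induction_on' with
  | add a b ha hb =>
    obtain ⟨A, rfl⟩ := ha
    obtain ⟨B, rfl⟩ := hb
    exact ⟨A + B, by simp only [Polynomial.map_add]; abel⟩
  | monomial m c =>
    obtain ⟨x, rfl⟩ := hσ c
    exact ⟨monomial m x, by simp only [map_monomial, map_sub]⟩

theorem Polynomial.existsUnique_degree_lt_dvd_sub {R : Type*} [CommRing R] [Nontrivial R]
    {g : R[X]} (hg : g.Monic) (f : R[X]) : ∃! r : R[X], r.degree < g.degree ∧ g ∣ f - r := by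
  refine ⟨f %ₘ g, ⟨degree_modByMonic_lt f hg, ?_⟩, ?_⟩
  · exact ⟨f /ₘ g, by linear_combination -modByMonic_add_div f g⟩
  · rintro r ⟨hr, hdvd⟩
    have hmod : (f - r) %ₘ g = 0 := (modByMonic_eq_zero_iff_dvd hg).2 hdvd
    rw [sub_modByMonic, (modByMonic_eq_self_iff hg).2 hr, sub_eq_zero] at hmod
    exact hmod.symm

theorem ext_class_unique_small_representative_general
    (F : Type*) [Field F] [IsAlgClosed F] (p ℓ : ℕ) [Fact p.Prime] [CharP F p]
    (hℓ : 1 ≤ ℓ) (θ : F) (n : ℕ) (f : Polynomial F) :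
    ∃! R : Polynomial F, R.degree < (n : WithBot ℕ) ∧ ∃ B : Polynomial F,
      f - R = (Polynomial.map ((iterateFrobeniusEquiv F p ℓ).symm : F →+* F) B - B) *
        (Polynomial.X - Polynomial.C θ) ^ n := by
  have hsurj := surjective_map_sub_self
    (σ := ((iterateFrobeniusEquiv F p ℓ).symm : F →+* F))
    (surjective_iterateFrobeniusEquiv_symm_sub_self F p hℓ)
  have hdeg : ((X - C θ) ^ n).degree = (n : WithBot ℕ) := by simp
  refine (existsUnique_congr fun R ↦ and_congr (by rw [hdeg]) ?_).1
    (existsUnique_degree_lt_dvd_sub ((monic_X_sub_C θ).pow n) f)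
  rw [dvd_iff_exists_eq_mul_left]
  exact hsurj.exists (p := fun c ↦ f - R = c * (X - C θ) ^ n)

/-- Let `F` be an algebraically closed field of characteristic `p > 0`,
`q = p^ℓ`, `θ ∈ F` and `n ≥ 1`. For every polynomial `f ∈ F[t]` there is a unique
polynomial `R` of degree `< n` such that `f - R = (φ(B) - B)·(t - θ)^n` for some `B`,
where `φ` applies the inverse of the `q`-power automorphism to each coefficient.
(Ext¹(M_{C^{⊗n}}, M_{C^{⊗n}}) ≅ F[t]/{B^{(-1)}(t-θ)^n - (t-θ)^n B} ≅ F^n.) -/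
theorem ext_class_unique_small_representative
    (F : Type*) [Field F] [IsAlgClosed F] (p ℓ q : ℕ) [Fact p.Prime] [CharP F p]
    (hℓ : 1 ≤ ℓ) (hq : q = p ^ ℓ) (θ : F) (n : ℕ) (hn : 1 ≤ n) (f : Polynomial F) :
    ∃! R : Polynomial F, R.degree < (n : WithBot ℕ) ∧ ∃ B : Polynomial F,
      f - R = (Polynomial.map ((iterateFrobeniusEquiv F p ℓ).symm : F →+* F) B - B) *
        (Polynomial.X - Polynomial.C θ) ^ n :=
  ext_class_unique_small_representative_general F p ℓ hℓ θ n f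
end

section
/- Let L be a normed field whose norm is nonarchimedean (the distance is ultrametric), θ ∈ L with ‖θ‖ > 1, and n ≥ 1. Let M be the n×n matrix over L with M_{ij} = (−1)^{j−i}·θ^{−(j−i+1)} for i ≤ j and 0 for i > j (the inverse of the Jordan block with diagonal θ). Then for every vector v ∈ L^n, the vectors M^ℓ·v (ℓ-th matrix power applied to v) tend to 0 as ℓ → ∞; equivalently, the sup-norm |M^ℓ·v|_n := max_i ‖(M^ℓ·v)_i‖ tends to 0. -/
/-- Let `L` be a nonarchimedean normed field and `θ ∈ L` with
`‖θ‖ > 1`. Let `M` be the inverse of the `n×n` Jordan block with diagonal `θ`, i.e.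
`M_{ij} = (-1)^{j-i} θ^{-(j-i+1)}` for `i ≤ j` and `0` otherwise. Then for every vector
`v ∈ L^n` the iterates `M^ℓ · v` tend to `0` as `ℓ → ∞` (equivalently, their sup-norms
tend to `0`). -/
theorem jordan_block_inverse_iterates_tendsto_zero
    (L : Type*) [NormedField L] [IsUltrametricDist L] (θ : L) (hθ : 1 < ‖θ‖)
    (n : ℕ) (hn : 1 ≤ n) (M : Matrix (Fin n) (Fin n) L)
    (hM : ∀ i j : Fin n,
      M i j = if i ≤ j then (-1 : L) ^ ((j : ℕ) - (i : ℕ)) * θ⁻¹ ^ ((j : ℕ) - (i : ℕ) + 1)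
              else 0)
    (v : Fin n → L) :
    Filter.Tendsto (fun ℓ : ℕ => (M ^ ℓ).mulVec v) Filter.atTop (nhds 0) := by
  set r : ℝ := ‖θ‖⁻¹ with hr
  have hθ0 : (0:ℝ) < ‖θ‖ := lt_trans one_pos hθ
  have hr0 : 0 < r := inv_pos.mpr hθ0
  have hr1 : r < 1 := inv_lt_one_of_one_lt₀ hθ
  -- each entry of M has norm ≤ r
  have hMentry : ∀ i j : Fin n, ‖M i j‖ ≤ r := by
    intro i j
    rw [hM i j]
    split_ifs with h
    · rw [norm_mul, norm_pow, norm_pow, norm_neg, norm_one, one_pow, one_mul, norm_inv]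
      calc (‖θ‖⁻¹) ^ ((j:ℕ) - i + 1) ≤ (‖θ‖⁻¹) ^ 1 :=
            pow_le_pow_of_le_one (le_of_lt hr0) hr1.le (Nat.le_add_left 1 _)
        _ = r := pow_one _
    · simpa using hr0.le
  -- entries of M^ℓ bounded by r^ℓ
  have hpow : ∀ ℓ : ℕ, ∀ i j : Fin n, ‖(M ^ ℓ) i j‖ ≤ r ^ ℓ := by
    intro ℓ
    induction ℓ with
    | zero =>
      intro i j
      simp only [pow_zero, Matrix.one_apply]
      split_ifs <;> simp
    | succ k ih =>
      intro i j
      rw [pow_succ, Matrix.mul_apply]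
      refine IsUltrametricDist.norm_sum_le_of_forall_le_of_nonneg
        (by positivity) (fun t _ => ?_)
      rw [norm_mul, pow_succ]
      exact mul_le_mul (ih i t) (hMentry t j) (norm_nonneg _) (pow_nonneg hr0.le _)
  -- bound on coordinates of M^ℓ.mulVec v
  have hne : (Finset.univ : Finset (Fin n)).Nonempty := by
    simpa [Finset.univ_nonempty_iff] using Fin.pos_iff_nonempty.mp hn
  set C : ℝ := Finset.univ.sup' hne (fun j => ‖v j‖) with hC
  have hC0 : 0 ≤ C := le_trans (norm_nonneg (v hne.choose)) (Finset.le_sup' (fun j => ‖v j‖) (Finset.mem_univ hne.choose))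
  have hbound : ∀ ℓ : ℕ, ∀ i : Fin n, ‖(M ^ ℓ).mulVec v i‖ ≤ C * r ^ ℓ := by
    intro ℓ i
    rw [Matrix.mulVec, dotProduct]
    refine IsUltrametricDist.norm_sum_le_of_forall_le_of_nonneg (by positivity)
      (fun j _ => ?_)
    rw [norm_mul, mul_comm C]
    exact mul_le_mul (hpow ℓ i j) (Finset.le_sup' (fun j => ‖v j‖) (Finset.mem_univ j))
      (norm_nonneg _) (pow_nonneg hr0.le _)
  -- conclude coordinatewise
  rw [tendsto_pi_nhds]
  intro i
  have h0 : Filter.Tendsto (fun ℓ : ℕ => C * r ^ ℓ) Filter.atTop (nhds 0) := by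
    simpa using (tendsto_pow_atTop_nhds_zero_of_lt_one hr0.le hr1).const_mul C
  refine squeeze_zero_norm (fun ℓ => ?_) h0
  exact hbound ℓ i
end
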